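/- The anti-linear involution τ(X) = conj(X) on sl(3,ℂ) satisfies the relation σ̂ ∘ τ ∘ σ̂ = τ, where σ̂(X) = -P X^T P⁻¹ with P = diag(ε²,ε⁴,-1)·P₀. -/

import Mathlib

open Matrix Complex

noncomputable section

def ε : ℂ := Complex.exp (Real.pi * Complex.I / 3)

def P₀ : Matrix (Fin 3) (Fin 3) ℂ := !![0, 1, 0; 1, 0, 0; 0, 0, -1]

def Pmat : Matrix (Fin 3) (Fin 3) ℂ := Matrix.diagonal ![ε ^ 2, ε ^ 4, -1] * P₀

/-- `σ̂(X) = -P Xᵀ P⁻¹`. -/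
def sigmaHat (X : Matrix (Fin 3) (Fin 3) ℂ) : Matrix (Fin 3) (Fin 3) ℂ :=
  -(Pmat * Xᵀ * Pmat⁻¹)

/-- `τ(X) = conj(X)`, entrywise complex conjugation (split real form). -/
def tauS (X : Matrix (Fin 3) (Fin 3) ℂ) : Matrix (Fin 3) (Fin 3) ℂ :=
  X.map (starRingEnd ℂ)

/-! `P` is Hermitian, because `conj (ε ^ 2) = ε ^ 4`. For Hermitian invertible `P`,
conjugating `P Xᵀ P⁻¹` entrywise gives `(P⁻¹ (conj X) P)ᵀ`, so `σ̂` applied to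
`τ (σ̂ X)` cancels the two transposes and the conjugation by `P`. -/

open scoped ComplexConjugate

theorem Matrix.IsHermitian.neg_mul_transpose_mul_inv_map_star_cancel {n R : Type*} [Fintype n]
    [DecidableEq n] [CommRing R] [StarRing R] {P : Matrix n n R} (hP : P.IsHermitian)
    (hdet : IsUnit P.det) (X : Matrix n n R) :
    -(P * ((-(P * Xᵀ * P⁻¹)).map star)ᵀ * P⁻¹) = X.map star := by
  have hconj : (P * Xᵀ * P⁻¹).map star = (P⁻¹ * X.map star * P)ᵀ := by
    rw [← conjTranspose_transpose, conjTranspose_mul, conjTranspose_mul, conjTranspose_nonsing_inv,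
      hP.eq, transpose_conjTranspose, Matrix.mul_assoc]
  rw [Matrix.map_neg _ star_neg, hconj, transpose_neg, transpose_transpose, mul_neg, neg_mul,
    neg_neg, ← Matrix.mul_assoc, mul_nonsing_inv_cancel_left _ _ hdet,
    mul_nonsing_inv_cancel_right _ _ hdet]

lemma ε_pow_six : ε ^ 6 = 1 := by
  rw [ε, ← Complex.exp_nat_mul, ← Complex.exp_two_pi_mul_I]
  ring_nf

lemma conj_ε : conj ε = ε⁻¹ := by
  rw [ε, ← Complex.exp_neg, ← Complex.exp_conj]
  congr 1
  simp [map_div₀, map_ofNat, neg_div]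

lemma conj_ε_pow_two : conj ε ^ 2 = ε ^ 4 := by
  rw [conj_ε, inv_pow, inv_eq_of_mul_eq_one_right]
  rw [← pow_add, ε_pow_six]

lemma conj_ε_pow_four : conj ε ^ 4 = ε ^ 2 := by
  rw [conj_ε, inv_pow, inv_eq_of_mul_eq_one_right]
  rw [← pow_add, ε_pow_six]

lemma Pmat_eq : Pmat = !![0, ε ^ 2, 0; ε ^ 4, 0, 0; 0, 0, 1] := by
  ext i j
  fin_cases i <;> fin_cases j <;> simp [Pmat, P₀]

lemma Pmat_isHermitian : Pmat.IsHermitian := by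
  rw [Pmat_eq]
  ext i j
  fin_cases i <;> fin_cases j <;> simp [conj_ε_pow_two, conj_ε_pow_four]

lemma isUnit_det_Pmat : IsUnit Pmat.det := by
  simp [Pmat_eq, det_fin_three, ε]

/-- The anti-linear involution `τ(X) = conj X` satisfies `σ̂ ∘ τ ∘ σ̂ = τ`. -/
theorem stmt3 : ∀ X : Matrix (Fin 3) (Fin 3) ℂ, sigmaHat (tauS (sigmaHat X)) = tauS X :=
  Pmat_isHermitian.neg_mul_transpose_mul_inv_map_star_cancel isUnit_det_Pmat
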